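/- Let E be a field of characteristic zero and K/E a finite Galois extension with Galois group G of order d. Each σ ∈ G extends uniquely to a field automorphism of K(X) fixing X (hence fixing E(X) pointwise), and these extensions commute with the derivative D = d/dX. Suppose a ∈ E(X), viewed inside K(X), can be written as a = D(g_0) + Σ_{ℓ=1}^{L} γ_ℓ · D(g_ℓ)/g_ℓ with g_0 ∈ K(X), nonzero g_1, …, g_L ∈ K(X), and γ_1, …, γ_L ∈ E. Then, setting g̃_0 = (1/d) Σ_{σ ∈ G} σ(g_0) and g̃_ℓ = ∏_{σ ∈ G} σ(g_ℓ), one has g̃_0, g̃_1, …, g̃_L ∈ E(X) with g̃_1, …, g̃_L nonzero, and a = D(g̃_0) + Σ_{ℓ=1}^{L} (γ_ℓ/d) · D(g̃_ℓ)/g̃_ℓ. (Galois descent for logarithmic-derivative decompositions.) -/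

import Mathlib

/-- `h ∈ E(X)`: the rational function `h ∈ K(X)` lies in the subfield `E(X)`,
i.e. it is a quotient of two polynomials with coefficients in `E`. -/
def RatFunc.memBaseField (E K : Type*) [Field E] [Field K] [Algebra E K]
    (h : RatFunc K) : Prop :=
  ∃ p q : Polynomial E, q ≠ 0 ∧
    h = algebraMap (Polynomial K) (RatFunc K) (p.map (algebraMap E K)) /
        algebraMap (Polynomial K) (RatFunc K) (q.map (algebraMap E K))

/-!
Every `σ ∈ G` acts on `K(X)` coefficientwise on numerator and denominator, so it commutes with
`D` and fixes `E(X)`. Applying `σ` to the decomposition of the invariant `a` and summing over `G`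
gives `d • a = D (∑ σ g₀) + ∑ γ_ℓ D(∏ σ g_ℓ)/∏ σ g_ℓ`, because logarithmic derivatives turn
products into sums. Trace and norm are `G`-invariant, and a `G`-invariant rational function lies
in `E(X)`: its reduced form `num / denom` with monic denominator is unique, so `G` fixes the
coefficients of `num` and `denom`, which therefore lie in `E`.
-/

open Polynomial
open scoped nonZeroDivisors

theorem Derivation.map_prod_div_prod {R A ι : Type*} [CommRing R] [Field A] [Algebra R A]
    (D : Derivation R A A) (s : Finset ι) (f : ι → A) (hf : ∀ i ∈ s, f i ≠ 0) :
    D (∏ i ∈ s, f i) / ∏ i ∈ s, f i = ∑ i ∈ s, D (f i) / f i :=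
  letI : Differential A := ⟨D.restrictScalars ℤ⟩
  Differential.logDeriv_prod ι s f hf

theorem Polynomial.mem_lifts_of_forall_map_eq {E K : Type*} [Field E] [Field K] [Algebra E K]
    [FiniteDimensional E K] [IsGalois E K] {P : K[X]}
    (hP : ∀ σ : K ≃ₐ[E] K, P.map (σ : K →+* K) = P) : P ∈ lifts (algebraMap E K) := by
  refine (lifts_iff_coeff_lifts P).2 fun n => ?_
  rw [← IntermediateField.mem_bot, IsGalois.mem_bot_iff_fixed]
  intro σ
  simpa using congrArg (coeff · n) (hP σ)

namespace RatFunc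

variable {K L : Type*} [Field K] [Field L]

theorem num_denom_eq_of_isCoprime {x : RatFunc K} {p q : K[X]} (hq : q.Monic)
    (hpq : IsCoprime p q) (hx : x = algebraMap K[X] (RatFunc K) p / algebraMap _ _ q) :
    x.num = p ∧ x.denom = q := by
  have key : x.num * q = p * x.denom := (num_mul_eq_mul_denom_iff hq.ne_zero).mpr hx
  have hqd : q ∣ x.denom := hpq.symm.dvd_of_dvd_mul_left ⟨x.num, by rw [← key, mul_comm]⟩
  have hdq : x.denom ∣ q :=
    x.isCoprime_num_denom.symm.dvd_of_dvd_mul_left ⟨p, by rw [key, mul_comm]⟩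
  have hden : x.denom = q :=
    eq_of_monic_of_associated (monic_denom x) hq (associated_of_dvd_dvd hdq hqd)
  refine ⟨mul_right_cancel₀ hq.ne_zero ?_, hden⟩
  rw [key, hden]

theorem ringHom_ext_of_C_X {f g : RatFunc K →+* RatFunc L}
    (hC : ∀ x, f (C x) = g (C x)) (hX : f X = g X) : f = g :=
  IsLocalization.ringHom_ext K[X]⁰ <| Polynomial.ringHom_ext
    (fun x => by simpa [algebraMap_C] using hC x) (by simpa [algebraMap_X] using hX)

variable {F : Type*} [FunLike F (RatFunc K) (RatFunc L)] [RingHomClass F (RatFunc K) (RatFunc L)]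
  {f : F} {s : K →+* L}

theorem ringHom_algebraMap_of_C_X (hC : ∀ x, f (C x) = C (s x)) (hX : f X = X) (p : K[X]) :
    f (algebraMap K[X] (RatFunc K) p) = algebraMap L[X] (RatFunc L) (p.map s) := by
  have : (f : RatFunc K →+* RatFunc L).comp (algebraMap K[X] (RatFunc K)) =
      (algebraMap L[X] (RatFunc L)).comp (Polynomial.mapRingHom s) :=
    Polynomial.ringHom_ext (fun x => by simp [algebraMap_C, hC]) (by simp [algebraMap_X, hX])
  exact RingHom.congr_fun this p

theorem ringHom_apply_of_C_X (hC : ∀ x, f (C x) = C (s x)) (hX : f X = X) (h : RatFunc K) :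
    f h = algebraMap L[X] (RatFunc L) (h.num.map s) /
      algebraMap L[X] (RatFunc L) (h.denom.map s) := by
  conv_lhs => rw [← num_div_denom h]
  rw [map_div₀, ringHom_algebraMap_of_C_X hC hX, ringHom_algebraMap_of_C_X hC hX]

theorem num_denom_ringHom_of_C_X (hC : ∀ x, f (C x) = C (s x)) (hX : f X = X) (h : RatFunc K) :
    (f h).num = h.num.map s ∧ (f h).denom = h.denom.map s :=
  num_denom_eq_of_isCoprime ((monic_denom h).map s)
    (h.isCoprime_num_denom.map (Polynomial.mapRingHom s)) (ringHom_apply_of_C_X hC hX h)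

theorem ringHom_derivation_comm (hC : ∀ x, f (C x) = C (s x)) (hX : f X = X)
    {D₁ : Derivation K (RatFunc K) (RatFunc K)} {D₂ : Derivation L (RatFunc L) (RatFunc L)}
    (hD₁ : ∀ p, D₁ (algebraMap K[X] (RatFunc K) p) = algebraMap _ _ (derivative p))
    (hD₂ : ∀ p, D₂ (algebraMap L[X] (RatFunc L) p) = algebraMap _ _ (derivative p))
    (h : RatFunc K) : f (D₁ h) = D₂ (f h) := by
  conv_rhs => rw [ringHom_apply_of_C_X hC hX, Derivation.leibniz_div]
  conv_lhs => rw [← num_div_denom h, Derivation.leibniz_div]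
  simp only [smul_eq_mul, hD₁, hD₂, map_mul, map_sub, map_inv₀, map_pow,
    ringHom_algebraMap_of_C_X hC hX, derivative_map]

section GaloisDescent

variable {E K : Type*} [Field E] [Field K] [Algebra E K]
  {act : (K ≃ₐ[E] K) → (RatFunc K ≃+* RatFunc K)}

theorem act_mul_apply (hC : ∀ σ x, act σ (C x) = C (σ x)) (hX : ∀ σ, act σ X = X)
    (τ σ : K ≃ₐ[E] K) (h : RatFunc K) : act τ (act σ h) = act (τ * σ) h := by
  have : (act τ : RatFunc K →+* RatFunc K).comp (act σ) =
      (act (τ * σ) : RatFunc K →+* RatFunc K) :=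
    ringHom_ext_of_C_X (fun x => by simp [hC]) (by simp [hX])
  exact RingHom.congr_fun this h

theorem act_eq_self_of_memBaseField (hC : ∀ σ x, act σ (C x) = C (σ x))
    (hX : ∀ σ, act σ X = X) {h : RatFunc K} (hh : memBaseField E K h) (σ : K ≃ₐ[E] K) :
    act σ h = h := by
  obtain ⟨p, q, -, rfl⟩ := hh
  have hσ : (σ : K →+* K).comp (algebraMap E K) = algebraMap E K := RingHom.ext σ.commutes
  simp only [map_div₀, ringHom_algebraMap_of_C_X (s := σ) (hC σ) (hX σ), map_map, hσ]

theorem memBaseField_of_forall_act_eq_self [FiniteDimensional E K] [IsGalois E K]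
    (hC : ∀ σ x, act σ (C x) = C (σ x)) (hX : ∀ σ, act σ X = X) {h : RatFunc K}
    (hh : ∀ σ, act σ h = h) : memBaseField E K h := by
  have hnum_denom (σ : K ≃ₐ[E] K) := num_denom_ringHom_of_C_X (s := σ) (hC σ) (hX σ) h
  obtain ⟨p, hp⟩ := (mem_lifts _).1 <| Polynomial.mem_lifts_of_forall_map_eq fun σ =>
    (hnum_denom σ).1.symm.trans (congrArg _ (hh σ))
  obtain ⟨q, hq⟩ := (mem_lifts _).1 <| Polynomial.mem_lifts_of_forall_map_eq fun σ =>
    (hnum_denom σ).2.symm.trans (congrArg _ (hh σ))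
  refine ⟨p, q, ?_, by rw [hp, hq, num_div_denom]⟩
  rintro rfl
  exact h.denom_ne_zero (by rw [← hq, Polynomial.map_zero])

variable [FiniteDimensional E K]

theorem act_sum_act (hC : ∀ σ x, act σ (C x) = C (σ x)) (hX : ∀ σ, act σ X = X)
    (τ : K ≃ₐ[E] K) (h : RatFunc K) : act τ (∑ σ, act σ h) = ∑ σ, act σ h := by
  rw [map_sum]
  exact Fintype.sum_equiv (Equiv.mulLeft τ) _ _ fun σ => act_mul_apply hC hX τ σ h

theorem act_prod_act (hC : ∀ σ x, act σ (C x) = C (σ x)) (hX : ∀ σ, act σ X = X)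
    (τ : K ≃ₐ[E] K) (h : RatFunc K) : act τ (∏ σ, act σ h) = ∏ σ, act σ h := by
  rw [map_prod]
  exact Fintype.prod_equiv (Equiv.mulLeft τ) _ _ fun σ => act_mul_apply hC hX τ σ h

end GaloisDescent

end RatFunc

theorem galois_descent_logarithmic_derivative
    (E K : Type*) [Field E] [CharZero E] [Field K] [Algebra E K]
    [FiniteDimensional E K] [IsGalois E K]
    (act : (K ≃ₐ[E] K) → (RatFunc K ≃+* RatFunc K))
    (hactC : ∀ σ x, act σ (RatFunc.C x) = RatFunc.C (σ x))
    (hactX : ∀ σ, act σ RatFunc.X = RatFunc.X)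
    (D : Derivation K (RatFunc K) (RatFunc K))
    (hD : ∀ p : Polynomial K,
      D (algebraMap (Polynomial K) (RatFunc K) p)
        = algebraMap (Polynomial K) (RatFunc K) (Polynomial.derivative p))
    (a : RatFunc K) (haE : RatFunc.memBaseField E K a)
    (L : ℕ) (g₀ : RatFunc K) (g : Fin L → RatFunc K) (hg : ∀ ℓ, g ℓ ≠ 0)
    (γ : Fin L → E)
    (ha : a = D g₀ + ∑ ℓ, RatFunc.C (algebraMap E K (γ ℓ)) * (D (g ℓ) / g ℓ)) :
    RatFunc.memBaseField E K
        ((Fintype.card (K ≃ₐ[E] K) : RatFunc K)⁻¹ * ∑ σ, act σ g₀) ∧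
      (∀ ℓ, RatFunc.memBaseField E K (∏ σ, act σ (g ℓ)) ∧ (∏ σ, act σ (g ℓ)) ≠ 0) ∧
      a = D ((Fintype.card (K ≃ₐ[E] K) : RatFunc K)⁻¹ * ∑ σ, act σ g₀)
          + ∑ ℓ, RatFunc.C (algebraMap E K (γ ℓ) / (Fintype.card (K ≃ₐ[E] K) : K))
              * (D (∏ σ, act σ (g ℓ)) / ∏ σ, act σ (g ℓ)) := by
  set d := Fintype.card (K ≃ₐ[E] K)
  have : CharZero (RatFunc K) :=
    charZero_of_injective_ringHom (RatFunc.C.comp (algebraMap E K)).injective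
  have hd : (d : RatFunc K) ≠ 0 := Nat.cast_ne_zero.2 Fintype.card_ne_zero
  have hactD σ h : act σ (D h) = D (act σ h) :=
    RatFunc.ringHom_derivation_comm (s := σ) (hactC σ) (hactX σ) hD hD h
  have hactg ℓ σ : act σ (g ℓ) ≠ 0 := (_root_.map_ne_zero _).2 (hg ℓ)
  have ha_conj σ : a = D (act σ g₀)
      + ∑ ℓ, RatFunc.C (algebraMap E K (γ ℓ)) * (D (act σ (g ℓ)) / act σ (g ℓ)) := by
    conv_lhs => rw [← RatFunc.act_eq_self_of_memBaseField hactC hactX haE σ, ha]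
    simp only [map_add, map_sum, map_mul, map_div₀, hactD, hactC, AlgEquiv.commutes]
  have ha_sum : d * a = D (∑ σ, act σ g₀)
      + ∑ ℓ, RatFunc.C (algebraMap E K (γ ℓ)) * (D (∏ σ, act σ (g ℓ)) / ∏ σ, act σ (g ℓ)) := by
    calc (d : RatFunc K) * a = ∑ σ : K ≃ₐ[E] K, a := by simp [d]
      _ = _ := Finset.sum_congr rfl fun σ _ => ha_conj σ
      _ = _ := by
        rw [Finset.sum_add_distrib, ← map_sum, Finset.sum_comm]
        simp only [← Finset.mul_sum, D.map_prod_div_prod _ _ fun σ _ => hactg _ σ]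
  refine ⟨RatFunc.memBaseField_of_forall_act_eq_self hactC hactX fun τ => ?_,
    fun ℓ => ⟨RatFunc.memBaseField_of_forall_act_eq_self hactC hactX
      (RatFunc.act_prod_act hactC hactX · _), Finset.prod_ne_zero_iff.2 (fun σ _ => hactg ℓ σ)⟩,
    ?_⟩
  · rw [map_mul, map_inv₀, map_natCast, RatFunc.act_sum_act hactC hactX]
  · have hD_inv : D ((d : RatFunc K)⁻¹) = 0 := by
      rw [Derivation.leibniz_inv, Derivation.map_natCast, smul_zero]
    have hC_div ℓ : RatFunc.C (algebraMap E K (γ ℓ) / d)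
        = (d : RatFunc K)⁻¹ * RatFunc.C (algebraMap E K (γ ℓ)) := by
      rw [map_div₀, map_natCast, inv_mul_eq_div]
    rw [Derivation.leibniz, hD_inv, smul_zero, add_zero, smul_eq_mul]
    simp only [hC_div, mul_assoc, ← Finset.mul_sum]
    rw [← mul_add, ← ha_sum, inv_mul_cancel_left₀ hd]
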